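/- Suppose k ≥ 3, 1 ≤ u ≤ k(k+1)/2, and assume the Vinogradov mean value bound ∫_{[0,1)^k} |f_k(α; X)|^{2u} dα ≪_ε X^{u+ε} holds for all large X. Fix 1 ≤ t ≤ k and suffices 1 ≤ i_1 < ... < i_t ≤ k, write σ = i_1 + ... + i_t, and for 0 < T ≤ X let B_T(X) denote the set of tuples (α_ι)_{ι ∉ {i_1,...,i_t}} ∈ [0,1)^{k−t} such that |f_k(α; X)| > T for some choice of (α_{i_1},...,α_{i_t}) ∈ [0,1)^t. Then μ(B_T(X)) ≪_ε X^{u+t+σ+ε} T^{−2u−t}. -/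

import Mathlib

/-!
If `|f_k(α; X)| > T` at one point, then `|f_k| > T/2` on a whole box with sides
`δ_j = T / (4πk X^{j+2})` in the fixed coordinates, because moving each `α_j` by at most `δ_j`
moves every phase by at most `T / (4πX)`. So every `β` in the exceptional set has fibre integral
`∫ |f_k(·, β)|^{2u} ≥ (T/2)^{2u} ∏ δ_j`, and Markov's inequality, Fubini and the mean value bound
give `(T/2)^{2u} (∏ δ_j) μ(B_T(X)) ≤ ∫ |f_k|^{2u} ≪ X^{u+ε}`.
-/

open MeasureTheory

/-- The Weyl sum `f_k(α; X) = ∑_{1 ≤ x ≤ X} e(α₁ x + ⋯ + α_k x^k)`. -/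
noncomputable def weylSum (k : ℕ) (α : Fin k → ℝ) (X : ℝ) : ℂ :=
  ∑ x ∈ Finset.Icc 1 ⌊X⌋₊,
    Complex.exp (2 * Real.pi * Complex.I * (∑ j : Fin k, α j * (x : ℝ) ^ ((j : ℕ) + 1)))

/-- Assemble a full coefficient vector from the fixed coefficients (indexed by `I`)
and the non-fixed coefficients (indexed by the complement of `I`). -/
def combine (k : ℕ) (I : Finset (Fin k)) (αfix : {i : Fin k // i ∈ I} → ℝ)
    (β : {i : Fin k // i ∉ I} → ℝ) : Fin k → ℝ :=
  fun i => if h : i ∈ I then αfix ⟨i, h⟩ else β ⟨i, h⟩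

open Real Set

lemma norm_cexp_two_pi_I_mul_sub_le (s t : ℝ) :
    ‖Complex.exp (2 * π * Complex.I * t) - Complex.exp (2 * π * Complex.I * s)‖ ≤
      2 * π * |t - s| := by
  have hsplit : Complex.exp (2 * π * Complex.I * t) - Complex.exp (2 * π * Complex.I * s) =
      Complex.exp ((2 * π * s : ℝ) * Complex.I) *
        (Complex.exp (Complex.I * (2 * π * (t - s) : ℝ)) - 1) := by
    rw [mul_sub, ← Complex.exp_add]
    push_cast
    ring_nf
  rw [hsplit, norm_mul, Complex.norm_exp_ofReal_mul_I, one_mul]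
  refine Real.norm_exp_I_mul_ofReal_sub_one_le.trans_eq ?_
  rw [Real.norm_eq_abs, abs_mul, abs_of_pos Real.two_pi_pos]

/-- The paper's box side `δ = T / (4πk X^{i+1})`, where coordinate `j : Fin k` carries the
exponent `i = j + 1`. -/
noncomputable def perturbRadius (k : ℕ) (X T : ℝ) (j : Fin k) : ℝ :=
  T / (4 * π * k * X ^ ((j : ℕ) + 2))

lemma abs_phase_sub_le {k : ℕ} {X T x : ℝ} (hX : 0 < X) (hT : 0 ≤ T) (hx : 0 ≤ x)
    (hxX : x ≤ X) {α α' : Fin k → ℝ} (h : ∀ j, |α' j - α j| ≤ perturbRadius k X T j) :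
    |∑ j, α' j * x ^ ((j : ℕ) + 1) - ∑ j, α j * x ^ ((j : ℕ) + 1)| ≤ T / (4 * π * X) := by
  have hterm : ∀ j : Fin k, |(α' j - α j) * x ^ ((j : ℕ) + 1)| ≤ T / (4 * π * k * X) := by
    intro j
    calc |(α' j - α j) * x ^ ((j : ℕ) + 1)| = |α' j - α j| * x ^ ((j : ℕ) + 1) := by
          rw [abs_mul, abs_of_nonneg (pow_nonneg hx _)]
      _ ≤ perturbRadius k X T j * X ^ ((j : ℕ) + 1) :=
          mul_le_mul (h j) (pow_le_pow_left₀ hx hxX _) (pow_nonneg hx _)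
            ((abs_nonneg _).trans (h j))
      _ = T / (4 * π * k * X) := by
          have := j.pos
          unfold perturbRadius; field_simp; ring
  rw [← Finset.sum_sub_distrib]
  calc |∑ j, (α' j * x ^ ((j : ℕ) + 1) - α j * x ^ ((j : ℕ) + 1))|
      ≤ ∑ j : Fin k, T / (4 * π * k * X) := by
        simp_rw [← sub_mul]
        exact (Finset.abs_sum_le_sum_abs _ _).trans (Finset.sum_le_sum fun j _ => hterm j)
    _ = (k / k) * (T / (4 * π * X)) := by
        rw [Finset.sum_const, Finset.card_univ, Fintype.card_fin, nsmul_eq_mul]; ring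
    _ ≤ T / (4 * π * X) := mul_le_of_le_one_left (by positivity) (div_self_le_one _)

lemma norm_weylSum_sub_le {k : ℕ} {X T : ℝ} (hX : 0 < X) (hT : 0 ≤ T) {α α' : Fin k → ℝ}
    (h : ∀ j, |α' j - α j| ≤ perturbRadius k X T j) :
    ‖weylSum k α' X - weylSum k α X‖ ≤ T / 2 := by
  have hterm : ∀ x ∈ Finset.Icc 1 ⌊X⌋₊,
      ‖Complex.exp (2 * π * Complex.I * (∑ j, α' j * (x : ℝ) ^ ((j : ℕ) + 1) : ℝ)) -
        Complex.exp (2 * π * Complex.I * (∑ j, α j * (x : ℝ) ^ ((j : ℕ) + 1) : ℝ))‖ ≤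
        T / (2 * X) := by
    intro x hx
    have hxX : (x : ℝ) ≤ X := (Nat.cast_le.2 (Finset.mem_Icc.1 hx).2).trans (Nat.floor_le hX.le)
    refine (norm_cexp_two_pi_I_mul_sub_le _ _).trans ?_
    calc 2 * π * |_ - _| ≤ 2 * π * (T / (4 * π * X)) := by
          gcongr; exact abs_phase_sub_le hX hT x.cast_nonneg hxX h
      _ = T / (2 * X) := by field_simp; ring
  calc ‖weylSum k α' X - weylSum k α X‖
      ≤ ∑ x ∈ Finset.Icc 1 ⌊X⌋₊, T / (2 * X) := by
        rw [weylSum, weylSum, ← Finset.sum_sub_distrib]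
        exact (norm_sum_le _ _).trans (Finset.sum_le_sum hterm)
    _ = ⌊X⌋₊ * (T / (2 * X)) := by simp
    _ ≤ X * (T / (2 * X)) := by gcongr; exact Nat.floor_le hX.le
    _ = T / 2 := by field_simp

lemma half_lt_norm_weylSum_of_close {k : ℕ} {X T : ℝ} (hX : 0 < X) (hT : 0 ≤ T)
    {α α' : Fin k → ℝ} (h : ∀ j, |α' j - α j| ≤ perturbRadius k X T j)
    (hlarge : T < ‖weylSum k α X‖) : T / 2 < ‖weylSum k α' X‖ := by
  have := norm_sub_norm_le (weylSum k α X) (weylSum k α' X)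
  rw [norm_sub_rev] at this
  linarith [norm_weylSum_sub_le hX hT h]

lemma perturbRadius_pos {k : ℕ} {X T : ℝ} (hX : 0 < X) (hT : 0 < T) (j : Fin k) :
    0 < perturbRadius k X T j := by
  have := j.pos
  unfold perturbRadius; positivity

lemma perturbRadius_le_one {k : ℕ} {X T : ℝ} (hX : 1 ≤ X) (hTX : T ≤ X) (j : Fin k) :
    perturbRadius k X T j ≤ 1 := by
  have hk : (1 : ℝ) ≤ k := by exact_mod_cast j.pos
  have hπ : (1 : ℝ) ≤ 4 * π := by linarith [Real.pi_gt_three]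
  unfold perturbRadius
  rw [div_le_one (by positivity)]
  calc T ≤ X := hTX
    _ ≤ X ^ ((j : ℕ) + 2) := le_self_pow₀ hX (by omega)
    _ = 1 * 1 * X ^ ((j : ℕ) + 2) := by ring
    _ ≤ 4 * π * k * X ^ ((j : ℕ) + 2) := by gcongr

lemma exists_Ico_subset_Ico_zero_one {a δ : ℝ} (ha : a ∈ Ico (0 : ℝ) 1) (hδ : 0 ≤ δ)
    (hδ1 : δ ≤ 1) : ∃ c, Ico c (c + δ) ⊆ Ico 0 1 ∧ ∀ y ∈ Ico c (c + δ), |y - a| ≤ δ := by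
  refine ⟨min a (1 - δ), fun y hy => ⟨?_, ?_⟩, fun y hy => abs_le.2 ⟨?_, ?_⟩⟩ <;>
    cases min_cases a (1 - δ) <;> grind

lemma exists_box_subset_unitCube {ι : Type*} [Fintype ι] {a δ : ι → ℝ}
    (ha : a ∈ univ.pi fun _ => Ico (0 : ℝ) 1) (hδ : ∀ i, 0 ≤ δ i) (hδ1 : ∀ i, δ i ≤ 1) :
    ∃ B ⊆ univ.pi (fun _ => Ico (0 : ℝ) 1), volume B = ENNReal.ofReal (∏ i, δ i) ∧
      ∀ y ∈ B, ∀ i, |y i - a i| ≤ δ i := by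
  choose c hc using fun i => exists_Ico_subset_Ico_zero_one (ha i trivial) (hδ i) (hδ1 i)
  refine ⟨univ.pi fun i => Ico (c i) (c i + δ i), pi_mono fun i _ => (hc i).1, ?_,
    fun y hy i => (hc i).2 _ (hy i trivial)⟩
  simp only [Real.volume_pi_Ico, add_sub_cancel_left,
    ENNReal.ofReal_prod_of_nonneg fun i _ => hδ i]

lemma mul_measure_le_setLIntegral {α : Type*} [MeasurableSpace α] {μ : Measure α}
    {S E : Set α} {h : α → ENNReal} (hh : AEMeasurable h (μ.restrict S)) {c : ENNReal}
    (hES : E ⊆ S) (hc : ∀ b ∈ E, c ≤ h b) : c * μ E ≤ ∫⁻ b in S, h b ∂μ := by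
  have hsub : E ⊆ {b | c ≤ h b} ∩ S := fun b hb => ⟨hc b hb, hES hb⟩
  have hE : μ E ≤ μ.restrict S {b | c ≤ h b} :=
    (measure_mono hsub).trans (Measure.le_restrict_apply _ _)
  exact (by gcongr : c * μ E ≤ _).trans (mul_meas_ge_le_lintegral₀ hh c)

section Fubini

variable {ι : Type*} [Fintype ι] (p : ι → Prop) [DecidablePred p] (s : ι → Set ℝ)

local notation "piSplit" => MeasurableEquiv.piEquivPiSubtypeProd (fun _ : ι => ℝ) p

lemma setLIntegral_pi_eq_setLIntegral_subtype {g : (ι → ℝ) → ENNReal} (hg : Measurable g) :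
    ∫⁻ x in univ.pi s, g x =
      ∫⁻ b in univ.pi (fun i : {i // ¬p i} => s i),
        ∫⁻ a in univ.pi (fun i : {i // p i} => s i), g ((piSplit).symm (a, b)) := by
  have hpre : piSplit ⁻¹' ((univ.pi fun i : {i // p i} => s i) ×ˢ
      univ.pi fun i : {i // ¬p i} => s i) = univ.pi s := by
    rw [← Equiv.preimage_piEquivPiSubtypeProd_symm_pi]
    exact (piSplit).toEquiv.preimage_symm_preimage _
  calc ∫⁻ x in univ.pi s, g x
      = ∫⁻ x in piSplit ⁻¹' ((univ.pi fun i : {i // p i} => s i) ×ˢ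
          univ.pi fun i : {i // ¬p i} => s i), g ((piSplit).symm (piSplit x)) := by
        rw [hpre]; simp only [MeasurableEquiv.symm_apply_apply]
    _ = ∫⁻ z in (univ.pi fun i : {i // p i} => s i) ×ˢ univ.pi fun i : {i // ¬p i} => s i,
          g ((piSplit).symm z) :=
        (volume_preserving_piEquivPiSubtypeProd _ p).setLIntegral_comp_preimage_emb
          (piSplit).measurableEmbedding (fun z => g ((piSplit).symm z)) _
    _ = _ := by
        rw [Measure.volume_eq_prod, ← Measure.prod_restrict]
        exact lintegral_prod_symm' _ (hg.comp (piSplit).symm.measurable)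

lemma mul_volume_le_setLIntegral_pi_of_le_fiber {g : (ι → ℝ) → ENNReal} (hg : Measurable g)
    {E : Set ({i // ¬p i} → ℝ)} {c : ENNReal} (hE : E ⊆ univ.pi fun i => s i)
    (hc : ∀ b ∈ E, c ≤ ∫⁻ a in univ.pi (fun i : {i // p i} => s i), g ((piSplit).symm (a, b))) :
    c * volume E ≤ ∫⁻ x in univ.pi s, g x := by
  rw [setLIntegral_pi_eq_setLIntegral_subtype p s hg]
  have hmeas : Measurable fun z : ({i // p i} → ℝ) × ({i // ¬p i} → ℝ) => g ((piSplit).symm z) :=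
    hg.comp (piSplit).symm.measurable
  exact mul_measure_le_setLIntegral hmeas.lintegral_prod_left'.aemeasurable hE hc

end Fubini

lemma continuous_weylSum (k : ℕ) (X : ℝ) : Continuous fun α : Fin k → ℝ => weylSum k α X := by
  unfold weylSum; fun_prop

lemma continuous_combine_left {k : ℕ} (I : Finset (Fin k)) (b : {i : Fin k // i ∉ I} → ℝ) :
    Continuous fun a => combine k I a b :=
  continuous_pi fun j => by
    by_cases hj : j ∈ I <;> simp only [combine, hj, dite_true, dite_false] <;> fun_prop

lemma setLIntegral_ofReal_norm_weylSum_pow (k u : ℕ) (X : ℝ) :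
    ∫⁻ α in univ.pi (fun _ : Fin k => Ico (0 : ℝ) 1), ENNReal.ofReal (‖weylSum k α X‖ ^ u) =
      ENNReal.ofReal (∫ α in univ.pi (fun _ : Fin k => Ico (0 : ℝ) 1), ‖weylSum k α X‖ ^ u) := by
  have hint : IntegrableOn (fun α => ‖weylSum k α X‖ ^ u) (univ.pi fun _ => Ico (0 : ℝ) 1) :=
    (((continuous_weylSum k X).norm.pow u).continuousOn.integrableOn_compact
      (isCompact_univ_pi fun _ => isCompact_Icc)).mono_set
      (pi_mono fun _ _ => Ico_subset_Icc_self)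
  exact (ofReal_integral_eq_lintegral_ofReal hint (ae_of_all _ fun _ => by positivity)).symm

lemma ofReal_mul_prod_perturbRadius_le_setLIntegral {k u : ℕ} {I : Finset (Fin k)} {X T : ℝ}
    (hX : 1 ≤ X) (hT : 0 < T) (hTX : T ≤ X) {a : {i : Fin k // i ∈ I} → ℝ}
    {b : {i : Fin k // i ∉ I} → ℝ} (ha : a ∈ univ.pi fun _ => Ico (0 : ℝ) 1)
    (hlarge : T < ‖weylSum k (combine k I a b) X‖) :
    ENNReal.ofReal ((T / 2) ^ (2 * u) * ∏ i : {i : Fin k // i ∈ I}, perturbRadius k X T i) ≤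
      ∫⁻ a' in univ.pi (fun _ => Ico (0 : ℝ) 1),
        ENNReal.ofReal (‖weylSum k (combine k I a' b) X‖ ^ (2 * u)) := by
  have hX0 : 0 < X := one_pos.trans_le hX
  obtain ⟨B, hBcube, hBvol, hBclose⟩ := exists_box_subset_unitCube
    (δ := fun i : {i : Fin k // i ∈ I} => perturbRadius k X T i) ha
    (fun i => (perturbRadius_pos hX0 hT (i : Fin k)).le)
    (fun i => perturbRadius_le_one hX hTX (i : Fin k))
  have hlow : ∀ a' ∈ B, (T / 2) ^ (2 * u) ≤ ‖weylSum k (combine k I a' b) X‖ ^ (2 * u) := by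
    intro a' ha'
    refine pow_le_pow_left₀ (by positivity) (half_lt_norm_weylSum_of_close hX0 hT.le ?_ hlarge).le _
    intro j
    by_cases hj : j ∈ I
    · simpa only [combine, hj, dite_true] using hBclose a' ha' ⟨j, hj⟩
    · simpa only [combine, hj, dite_false, sub_self, abs_zero] using
        (perturbRadius_pos hX0 hT j).le
  have hmeas : Measurable fun a' => ENNReal.ofReal (‖weylSum k (combine k I a' b) X‖ ^ (2 * u)) :=
    (((continuous_weylSum k X).comp (continuous_combine_left I b)).norm.pow _).measurable
      |>.ennreal_ofReal
  calc ENNReal.ofReal ((T / 2) ^ (2 * u) * ∏ i : {i : Fin k // i ∈ I}, perturbRadius k X T i)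
      = ∫⁻ _ in B, ENNReal.ofReal ((T / 2) ^ (2 * u)) := by
        rw [setLIntegral_const, hBvol, ENNReal.ofReal_mul (by positivity)]
    _ ≤ ∫⁻ a' in B, ENNReal.ofReal (‖weylSum k (combine k I a' b) X‖ ^ (2 * u)) :=
        setLIntegral_mono hmeas fun a' ha' => ENNReal.ofReal_le_ofReal (hlow a' ha')
    _ ≤ _ := lintegral_mono_set hBcube

lemma prod_perturbRadius {k : ℕ} (I : Finset (Fin k)) (X T : ℝ) :
    ∏ i : {i : Fin k // i ∈ I}, perturbRadius k X T i =
      T ^ I.card / ((4 * π * k) ^ I.card * X ^ (∑ i ∈ I, ((i : ℕ) + 1) + I.card)) := by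
  simp only [perturbRadius, Finset.prod_div_distrib, Finset.prod_const, Finset.prod_mul_distrib,
    Finset.card_univ, Fintype.card_coe, Finset.prod_pow_eq_pow_sum]
  rw [Finset.sum_coe_sort I fun i => (i : ℕ) + 2, Finset.sum_add_distrib, Finset.sum_add_distrib,
    Finset.sum_const, Finset.sum_const]
  ring_nf

lemma four_pi_mul_pow_card_pos {k : ℕ} (I : Finset (Fin k)) : 0 < (4 * π * k) ^ I.card := by
  rcases I.eq_empty_or_nonempty with rfl | ⟨i, -⟩
  · simp
  · have := i.pos; positivity

lemma mul_prod_perturbRadius_mul_eq {k u : ℕ} (I : Finset (Fin k)) {X T : ℝ} (hX : 0 < X)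
    (hT : 0 < T) (C ε : ℝ) :
    ((T / 2) ^ (2 * u) * ∏ i : {i : Fin k // i ∈ I}, perturbRadius k X T i) *
      (C * 2 ^ (2 * u) * (4 * π * k) ^ I.card *
        X ^ (((u : ℝ) + I.card + ∑ i ∈ I, ((i : ℕ) + 1)) + ε) * T ^ (-(2 * (u : ℝ) + I.card))) =
      C * X ^ ((u : ℝ) + ε) := by
  have hD := (four_pi_mul_pow_card_pos I).ne'
  have hXpow : X ^ (((u : ℝ) + I.card + ∑ i ∈ I, ((i : ℕ) + 1)) + ε) =
      X ^ (∑ i ∈ I, ((i : ℕ) + 1) + I.card) * X ^ ((u : ℝ) + ε) := by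
    rw [← Real.rpow_natCast, ← Real.rpow_add hX]; push_cast; ring_nf
  have hTpow : T ^ (-(2 * (u : ℝ) + I.card)) = (T ^ (2 * u + I.card))⁻¹ := by
    rw [← Real.rpow_natCast, ← Real.rpow_neg hT.le]; push_cast; ring_nf
  rw [prod_perturbRadius, hXpow, hTpow, div_pow]
  field_simp
  ring

theorem measure_large_values_general (k u : ℕ) (I : Finset (Fin k))
    (hmv : ∀ ε : ℝ, 0 < ε → ∃ C : ℝ, 0 < C ∧ ∀ X : ℝ, 1 ≤ X →
      (∫ α in (Set.univ.pi fun _ : Fin k => Set.Ico (0 : ℝ) 1),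
        ‖weylSum k α X‖ ^ (2 * u)) ≤ C * X ^ ((u : ℝ) + ε)) :
    ∀ ε : ℝ, 0 < ε → ∃ C : ℝ, 0 < C ∧ ∀ X T : ℝ, 1 ≤ X → 0 < T → T ≤ X →
      volume {β : {i : Fin k // i ∉ I} → ℝ |
          β ∈ Set.univ.pi (fun _ => Set.Ico (0 : ℝ) 1) ∧
          ∃ αfix : {i : Fin k // i ∈ I} → ℝ,
            αfix ∈ Set.univ.pi (fun _ => Set.Ico (0 : ℝ) 1) ∧
            T < ‖weylSum k (combine k I αfix β) X‖} ≤
        ENNReal.ofReal (C * X ^ (((u : ℝ) + I.card + ∑ i ∈ I, ((i : ℕ) + 1)) + ε) *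
          T ^ (-(2 * (u : ℝ) + I.card))) := by
  intro ε hε
  obtain ⟨C, hC, hmean⟩ := hmv ε hε
  refine ⟨C * 2 ^ (2 * u) * (4 * π * k) ^ I.card, ?_, fun X T hX hT hTX => ?_⟩
  · have := four_pi_mul_pow_card_pos I
    positivity
  have hX0 : 0 < X := one_pos.trans_le hX
  have hc : 0 < (T / 2) ^ (2 * u) * ∏ i : {i : Fin k // i ∈ I}, perturbRadius k X T i :=
    mul_pos (by positivity) (Finset.prod_pos fun i _ => perturbRadius_pos hX0 hT _)
  rw [← ENNReal.mul_le_mul_iff_right (ENNReal.ofReal_pos.2 hc).ne' ENNReal.ofReal_ne_top,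
    ← ENNReal.ofReal_mul hc.le, mul_prod_perturbRadius_mul_eq I hX0 hT C ε]
  calc _ ≤ ∫⁻ α in univ.pi fun _ => Ico (0 : ℝ) 1, ENNReal.ofReal (‖weylSum k α X‖ ^ (2 * u)) := by
        refine mul_volume_le_setLIntegral_pi_of_le_fiber (· ∈ I) (fun _ => Ico (0 : ℝ) 1)
          ((continuous_weylSum k X).norm.pow _).measurable.ennreal_ofReal (fun b hb => hb.1) ?_
        rintro b ⟨-, a, ha, hlarge⟩
        -- `convert` reconciles the two `Fintype` instances on `I`; `combine` unfolds to
        -- `(piEquivPiSubtypeProd _ (· ∈ I)).symm`.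
        convert ofReal_mul_prod_perturbRadius_le_setLIntegral hX hT hTX ha hlarge
        rfl
    _ = ENNReal.ofReal (∫ α in univ.pi fun _ => Ico (0 : ℝ) 1, ‖weylSum k α X‖ ^ (2 * u)) :=
        setLIntegral_ofReal_norm_weylSum_pow k (2 * u) X
    _ ≤ _ := ENNReal.ofReal_le_ofReal (hmean X hX)

/-- Lemma 2.2: under the mean value bound `∫ |f_k|^{2u} ≪_ε X^{u+ε}`, the set of
non-fixed coefficient tuples in `[0,1)^{k−t}` for which `|f_k(α;X)| > T` for some choice
of the fixed coefficients in `[0,1)^t` has measure `≪_ε X^{u+t+σ+ε} T^{−2u−t}`. -/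
theorem measure_large_values (k u : ℕ) (hk : 3 ≤ k) (hu1 : 1 ≤ u)
    (hu2 : 2 * u ≤ k * (k + 1)) (I : Finset (Fin k)) (ht1 : 1 ≤ I.card)
    (hmv : ∀ ε : ℝ, 0 < ε → ∃ C : ℝ, 0 < C ∧ ∀ X : ℝ, 1 ≤ X →
      (∫ α in (Set.univ.pi fun _ : Fin k => Set.Ico (0 : ℝ) 1),
        ‖weylSum k α X‖ ^ (2 * u)) ≤ C * X ^ ((u : ℝ) + ε)) :
    ∀ ε : ℝ, 0 < ε → ∃ C : ℝ, 0 < C ∧ ∀ X T : ℝ, 1 ≤ X → 0 < T → T ≤ X →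
      volume {β : {i : Fin k // i ∉ I} → ℝ |
          β ∈ Set.univ.pi (fun _ => Set.Ico (0 : ℝ) 1) ∧
          ∃ αfix : {i : Fin k // i ∈ I} → ℝ,
            αfix ∈ Set.univ.pi (fun _ => Set.Ico (0 : ℝ) 1) ∧
            T < ‖weylSum k (combine k I αfix β) X‖} ≤
        ENNReal.ofReal (C * X ^ (((u : ℝ) + I.card + ∑ i ∈ I, ((i : ℕ) + 1)) + ε) *
          T ^ (-(2 * (u : ℝ) + I.card))) :=
  measure_large_values_general k u I hmv
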